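/- arXiv:1405.4444 — 3 statements merged into one kernel-verified Lean document; each statement's English description precedes it below -/
import Mathlib

section
/- For every integer g ≥ 2 and every integer k ≥ 1, there exist primes p_1 < p_2 < ⋯ < p_k, each exceeding max(g, k), such that s_g(p_1) < s_g(p_2) < ⋯ < s_g(p_k); that is, one can find k increasing primes, all larger than both g and k, whose base-g digit sums are strictly increasing. -/
private lemma digitSum_ge_of_mod (g : ℕ) (hg : 2 ≤ g) :
    ∀ m n : ℕ, n % g ^ m = g ^ m - 1 → m * (g - 1) ≤ (Nat.digits g n).sum := by
  intro m
  induction m with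
  | zero => intro n _; simp
  | succ m ih =>
    intro n hn
    have hg0 : 0 < g := by omega
    have hgm : 1 ≤ g ^ m := Nat.one_le_pow _ _ hg0
    have hpow2 : 2 ≤ g ^ (m+1) := by
      calc 2 ≤ g := hg
      _ = g ^ 1 := (pow_one g).symm
      _ ≤ g ^ (m+1) := Nat.pow_le_pow_right hg0 (by omega)
    have hn0 : 0 < n := by
      rcases Nat.eq_zero_or_pos n with h | h
      · subst h; simp at hn; omega
      · exact h
    have epow : g ^ (m+1) = g * g ^ m := by ring
    have emul : g * (g ^ m - 1) = g * g ^ m - g := by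
      rw [Nat.mul_sub, Nat.mul_one]
    have key : g ^ (m+1) - 1 = g * (g ^ m - 1) + (g - 1) := by
      have hgg : g ≤ g * g ^ m := Nat.le_mul_of_pos_right g hgm
      omega
    set Q := n / g ^ (m+1) with hQ
    have hdm := Nat.div_add_mod n (g ^ (m+1))
    rw [hn, ← hQ] at hdm
    have e1 : g ^ (m+1) * Q = g * (g ^ m * Q) := by rw [epow]; ring
    have e2 : g * (g ^ m * Q + (g ^ m - 1)) = g * (g ^ m * Q) + g * (g ^ m - 1) :=
      Nat.mul_add ..
    have hqeq : n = g * (g ^ m * Q + (g ^ m - 1)) + (g - 1) := by omega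
    have hndiv : n / g = g ^ m * Q + (g ^ m - 1) := by
      rw [hqeq, Nat.mul_add_div hg0, Nat.div_eq_of_lt (by omega)]
      omega
    have hnmod : n % g = g - 1 := by
      conv_lhs => rw [hqeq]
      rw [Nat.mul_add_mod, Nat.mod_eq_of_lt (by omega)]
    have hdivmod : (n / g) % g ^ m = g ^ m - 1 := by
      rw [hndiv, Nat.mul_add_mod, Nat.mod_eq_of_lt (by omega)]
    rw [Nat.digits_def' (by omega : 1 < g) hn0]
    simp only [List.sum_cons]
    have := ih (n / g) hdivmod
    have : m * (g - 1) ≤ (Nat.digits g (n / g)).sum := this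
    have hstep : (m + 1) * (g - 1) = m * (g - 1) + (g - 1) := by ring
    omega

private lemma exists_prime_gt (g : ℕ) (hg : 2 ≤ g) (B N : ℕ) :
    ∃ p : ℕ, p.Prime ∧ B < p ∧ N < (Nat.digits g p).sum := by
  set M := g ^ (N + 1) with hM
  have hM1 : 1 < M := by
    calc 1 < g := by omega
    _ = g ^ 1 := (pow_one g).symm
    _ ≤ g ^ (N+1) := Nat.pow_le_pow_right (by omega) (by omega)
  haveI : NeZero M := ⟨by omega⟩
  have hu : IsUnit (-1 : ZMod M) := IsUnit.neg isUnit_one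
  obtain ⟨p, hpB, hp, hpmod⟩ := Nat.forall_exists_prime_gt_and_eq_mod hu B
  refine ⟨p, hp, hpB, ?_⟩
  have hmod : p % M = M - 1 := by
    have hcast : ((M - 1 : ℕ) : ZMod M) = -1 := by
      rw [Nat.cast_sub (by omega : 1 ≤ M)]
      simp
    have h1 : ((p % M : ℕ) : ZMod M) = ((M - 1 : ℕ) : ZMod M) := by
      rw [ZMod.natCast_mod, hpmod, hcast]
    have h2 := ZMod.val_cast_of_lt (Nat.mod_lt p (by omega : 0 < M))
    have h3 := ZMod.val_cast_of_lt (by omega : M - 1 < M)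
    rw [h1, h3] at h2
    omega
  have hds := digitSum_ge_of_mod g hg (N + 1) p hmod
  have hg1 : 1 ≤ g - 1 := by omega
  calc N < N + 1 := by omega
  _ = (N + 1) * 1 := by ring
  _ ≤ (N + 1) * (g - 1) := Nat.mul_le_mul_left _ hg1
  _ ≤ (Nat.digits g p).sum := hds

private lemma cons_strictMono {k : ℕ} {a : ℕ} {f : Fin k → ℕ}
    (hf : StrictMono f) (ha : ∀ i, a < f i) : StrictMono (Fin.cons a f) := by
  intro i j hij
  revert hij
  refine Fin.cases ?_ (fun j' => ?_) j
  · intro hij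
    exact absurd hij (by simp)
  · refine Fin.cases ?_ (fun i' => ?_) i <;> intro hij
    · simpa using ha j'
    · simp only [Fin.cons_succ]
      exact hf (by simpa [Fin.succ_lt_succ_iff] using hij)

private lemma exists_chain (g : ℕ) (hg : 2 ≤ g) :
    ∀ (k B N : ℕ), ∃ p : Fin k → ℕ, (∀ i, Nat.Prime (p i)) ∧ StrictMono p ∧
      (∀ i, B < p i) ∧ StrictMono (fun i => (Nat.digits g (p i)).sum) ∧
      (∀ i, N < (Nat.digits g (p i)).sum) := by
  intro k
  induction k with
  | zero =>
    intro B N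
    exact ⟨fun i => i.elim0, fun i => i.elim0, fun i j h => i.elim0,
      fun i => i.elim0, fun i j h => i.elim0, fun i => i.elim0⟩
  | succ k ih =>
    intro B N
    obtain ⟨p0, hp0, hp0B, hp0N⟩ := exists_prime_gt g hg B N
    obtain ⟨q, hq, hqmono, hqB, hqsum, hqN⟩ := ih p0 ((Nat.digits g p0).sum)
    have hcons : (fun i : Fin (k+1) => (Nat.digits g (Fin.cons (α := fun _ => ℕ) p0 q i)).sum)
        = Fin.cons ((Nat.digits g p0).sum) (fun i => (Nat.digits g (q i)).sum) := by
      funext i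
      refine Fin.cases ?_ (fun j => ?_) i <;> simp
    refine ⟨Fin.cons p0 q, ?_, cons_strictMono hqmono hqB, ?_, ?_, ?_⟩
    · intro i
      exact Fin.cases hp0 (fun j => hq j) i
    · intro i
      exact Fin.cases (by simpa using hp0B) (fun j => by simpa using lt_trans hp0B (hqB j)) i
    · rw [hcons]
      exact cons_strictMono hqsum hqN
    · intro i
      exact Fin.cases (by simpa using hp0N) (fun j => by simpa using lt_trans hp0N (hqN j)) i

/-- For every base `g ≥ 2` and every `k ≥ 1`, there are `k` increasing primes, each
exceeding `max g k`, whose base-`g` digit sums are strictly increasing. -/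
theorem exists_primes_digitSum_increasing (g : ℕ) (hg : 2 ≤ g) (k : ℕ) (hk : 1 ≤ k) :
    ∃ p : Fin k → ℕ, (∀ i, Nat.Prime (p i)) ∧ StrictMono p ∧
      (∀ i, max g k < p i) ∧
      StrictMono (fun i => (Nat.digits g (p i)).sum) := by
  obtain ⟨p, h1, h2, h3, h4, _⟩ := exists_chain g hg k (max g k) 0
  exact ⟨p, h1, h2, h3, h4⟩
end

section
/- For every integer k ≥ 1 there is a threshold N_0 such that for all N ≥ N_0 the following holds: there exist pairwise disjoint finite sets P_1, P_2, …, P_k of primes, each contained in the interval (log_4 N, (1/2) log_3 N], such that for every 1 ≤ i ≤ k one has 4 i log 2 ≤ log 2 + Σ_{p ∈ P_i} log(p/(p−1)) ≤ (4 i + 1) log 2. -/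
/-!
Write `w p = log (p / (p - 1))`. Comparing the Euler product with the harmonic sum gives
`∑_{p ≤ y} w p ≥ log log y`, while comparing the primes with the odd numbers and telescoping
gives `∑_{p ≤ a} w p ≤ log 2 + ½ log (2a + 3)`. Hence, with `x = log₃ N`, the primes in
`(log x, x/2]` carry total weight at least `½ log log x - 3 log 2 → ∞`. Every weight is at most
`log 2`, so one can greedily carve out disjoint sets whose weights lie in
`[(4i + 3) log 2, (4i + 4) log 2]` for `i < k`.
-/
open Real Finset Filter

lemma log_div_sub_one_pos {x : ℝ} (hx : 1 < x) : 0 < log (x / (x - 1)) :=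
  log_pos <| (one_lt_div (by linarith)).mpr (by linarith)

lemma log_div_sub_one_le_log_two {x : ℝ} (hx : 2 ≤ x) : log (x / (x - 1)) ≤ log 2 :=
  log_le_log (div_pos (by linarith) (by linarith)) <| (div_le_iff₀ (by linarith)).mpr (by linarith)

lemma log_add_log_add_two_le {x : ℝ} (hx : 0 < x) : log x + log (x + 2) ≤ 2 * log (x + 1) := by
  rw [← log_mul hx.ne' (by linarith), two_mul, ← log_mul (by linarith) (by linarith)]
  exact log_le_log (by positivity) (by nlinarith)

lemma two_mul_sum_range_log_odd_sub_log_even_le (n : ℕ) :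
    2 * ∑ j ∈ range n, (log (2 * j + 3) - log (2 * j + 2)) ≤ log (2 * n + 1) := by
  have hterm (j : ℕ) : 2 * (log (2 * j + 3) - log (2 * j + 2)) ≤
      log (2 * (j + 1 : ℕ) + 1) - log (2 * j + 1) := by
    have := log_add_log_add_two_le (x := 2 * j + 1) (by positivity)
    push_cast
    ring_nf at this ⊢
    linarith
  calc 2 * ∑ j ∈ range n, (log (2 * j + 3) - log (2 * j + 2))
      ≤ ∑ j ∈ range n, (log (2 * (j + 1 : ℕ) + 1) - log (2 * j + 1)) := by
        rw [mul_sum]; exact sum_le_sum fun j _ => hterm j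
    _ = log (2 * n + 1) := by
        rw [sum_range_sub (fun j : ℕ => log (2 * j + 1))]; simp

lemma sum_log_div_sub_one_primesLE_le (n : ℕ) :
    ∑ p ∈ n.primesLE, log ((p : ℝ) / (p - 1)) ≤ log 2 + log (2 * n + 3) / 2 := by
  set odd := (range (n + 1)).image (fun j : ℕ => 2 * j + 3)
  have hsub : n.primesLE ⊆ insert 2 odd := by
    intro p hp
    rw [Nat.primesLE, Nat.mem_primesBelow] at hp
    rcases hp.2.eq_two_or_odd' with rfl | ⟨j, rfl⟩
    · exact mem_insert_self _ _
    · have : j ≠ 0 := by rintro rfl; exact Nat.not_prime_one hp.2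
      exact mem_insert_of_mem (mem_image.mpr ⟨j - 1, mem_range.mpr (by omega), by omega⟩)
  have h2 : 2 ∉ odd := by simp [odd]
  calc ∑ p ∈ n.primesLE, log ((p : ℝ) / (p - 1))
      ≤ ∑ p ∈ insert 2 odd, log ((p : ℝ) / (p - 1)) :=
        sum_le_sum_of_subset_of_nonneg hsub fun p hp _ => by
          have : 2 ≤ p := by
            rcases mem_insert.mp hp with rfl | hp
            · rfl
            · obtain ⟨j, -, rfl⟩ := mem_image.mp hp; omega
          exact (log_div_sub_one_pos (by exact_mod_cast this)).le
    _ = log 2 + ∑ j ∈ range (n + 1), (log (2 * j + 3) - log (2 * j + 2)) := by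
        rw [sum_insert h2, sum_image fun _ _ _ _ h => by omega]
        congr 1
        · norm_num
        · refine sum_congr rfl fun j _ => ?_
          push_cast
          rw [log_div (by positivity) (by linarith [j.cast_nonneg (α := ℝ)])]
          ring_nf
    _ ≤ log 2 + log (2 * n + 3) / 2 := by
        have := two_mul_sum_range_log_odd_sub_log_even_le (n + 1)
        push_cast at this
        ring_nf at this ⊢
        linarith

/-- Every `d ≤ n` is `(n+1)`-smooth, so the harmonic sum `∑_{d ≤ n} 1/d` is part of the
Euler product `∏_{p ≤ n} (1 - 1/p)⁻¹ = ∑_{m (n+1)-smooth} 1/m`. -/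
lemma log_add_one_le_prod_primesLE (n : ℕ) :
    log (n + 1) ≤ ∏ p ∈ n.primesLE, ((p : ℝ) / (p - 1)) := by
  let f : ℕ →* ℝ := invMonoidHom.comp (Nat.castRingHom ℝ : ℕ →* ℝ)
  have hf : ∀ {p : ℕ}, p.Prime → ‖f p‖ < 1 := fun hp => by
    simpa [f] using inv_lt_one_of_one_lt₀ (by exact_mod_cast hp.one_lt : (1 : ℝ) < _)
  have hsum := hasSum_subtype_iff_indicator.mp
    (EulerProduct.summable_and_hasSum_smoothNumbers_prod_primesBelow_geometric hf (n + 1)).2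
  have hsmooth : ∀ d ∈ Icc 1 n, (n + 1).smoothNumbers.indicator f d = (d : ℝ)⁻¹ := fun d hd => by
    rw [mem_Icc] at hd
    rw [Set.indicator_of_mem (Nat.mem_smoothNumbers_of_lt (by omega) (by omega))]
    rfl
  calc log (n + 1) ≤ ∑ d ∈ Icc 1 n, (d : ℝ)⁻¹ := by
        simpa [harmonic_eq_sum_Icc] using log_add_one_le_harmonic n
    _ = ∑ d ∈ Icc 1 n, (n + 1).smoothNumbers.indicator f d := (sum_congr rfl hsmooth).symm
    _ ≤ ∏ p ∈ (n + 1).primesBelow, (1 - f p)⁻¹ :=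
        sum_le_hasSum _ (fun d _ => Set.indicator_nonneg (fun m _ => by simp [f]) d) hsum
    _ = ∏ p ∈ n.primesLE, ((p : ℝ) / (p - 1)) := prod_congr rfl fun p hp => by
        have : (p : ℝ) ≠ 0 := by exact_mod_cast (Nat.prime_of_mem_primesBelow hp).ne_zero
        simp only [f, MonoidHom.coe_comp, Function.comp_apply, invMonoidHom_apply,
          MonoidHom.coe_coe, Nat.coe_castRingHom]
        field_simp

section Greedy

variable {ι : Type*} {w : ι → ℝ} {L : ℝ}

/-- Discard elements one at a time: each removal lowers the sum by at most `L`. -/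
lemma Finset.exists_subset_sum_mem_Icc (hL : 0 ≤ L) {t : ℝ} (ht : 0 ≤ t) (Q : Finset ι)
    (hw : ∀ x ∈ Q, w x ≤ L) (htQ : t ≤ ∑ x ∈ Q, w x) :
    ∃ S ⊆ Q, ∑ x ∈ S, w x ∈ Set.Icc t (t + L) := by
  classical
  induction Q using Finset.strongInduction with
  | H Q ih =>
    by_cases hQ : ∑ x ∈ Q, w x ≤ t + L
    · exact ⟨Q, subset_rfl, htQ, hQ⟩
    obtain ⟨q, hq⟩ : Q.Nonempty := nonempty_of_sum_ne_zero (f := w) fun h => by linarith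
    have hrest : t ≤ ∑ x ∈ Q.erase q, w x := by
      rw [sum_erase_eq_sub hq]; linarith [hw q hq]
    obtain ⟨S, hS, hSsum⟩ := ih _ (erase_ssubset hq) (fun x hx => hw x (mem_of_mem_erase hx)) hrest
    exact ⟨S, hS.trans (erase_subset q Q), hSsum⟩

lemma Finset.exists_pairwiseDisjoint_subsets_sum_mem_Icc (hL : 0 ≤ L) :
    ∀ {m : ℕ} (t : Fin m → ℝ), (∀ i, 0 ≤ t i) → ∀ Q : Finset ι, (∀ x ∈ Q, w x ≤ L) →
      ∑ i, (t i + L) ≤ ∑ x ∈ Q, w x →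
      ∃ P : Fin m → Finset ι, (∀ i, P i ⊆ Q) ∧ Pairwise (fun i j => Disjoint (P i) (P j)) ∧
        ∀ i, ∑ x ∈ P i, w x ∈ Set.Icc (t i) (t i + L)
  | 0, _, _, _, _, _ => ⟨Fin.elim0, nofun, nofun, nofun⟩
  | m + 1, t, ht, Q, hw, hsum => by
    classical
    rw [Fin.sum_univ_succ] at hsum
    have htail : 0 ≤ ∑ i : Fin m, (t i.succ + L) := sum_nonneg fun i _ => by linarith [ht i.succ]
    obtain ⟨S, hSQ, hS⟩ := Q.exists_subset_sum_mem_Icc hL (ht 0) hw (by linarith)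
    obtain ⟨P, hPQ, hP, hPsum⟩ := exists_pairwiseDisjoint_subsets_sum_mem_Icc hL
      (fun i => t i.succ) (fun i => ht i.succ) (Q \ S)
      (fun x hx => hw x (mem_sdiff.mp hx).1) (by rw [sum_sdiff_eq_sub hSQ]; linarith [hS.2])
    have hSP (i : Fin m) : Disjoint S (P i) := disjoint_of_subset_right (hPQ i) disjoint_sdiff
    refine ⟨Fin.cons S P, fun i => ?_, fun i j hij => ?_, fun i => ?_⟩
    · cases i using Fin.cases with
      | zero => exact hSQ
      | succ i => exact (hPQ i).trans sdiff_subset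
    · cases i using Fin.cases <;> cases j using Fin.cases
      · exact absurd rfl hij
      · exact hSP _
      · exact (hSP _).symm
      · exact hP (fun h => hij (congrArg Fin.succ h))
    · cases i using Fin.cases with
      | zero => exact hS
      | succ i => exact hPsum i

end Greedy

noncomputable def primesIoc (a b : ℝ) : Finset ℕ := {p ∈ (⌊b⌋₊).primesLE | a < p}

lemma mem_primesIoc {a b : ℝ} {p : ℕ} : p ∈ primesIoc a b ↔ p.Prime ∧ a < p ∧ p ≤ b := by
  rw [primesIoc, mem_filter, Nat.primesLE, Nat.mem_primesBelow, Nat.lt_succ_iff]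
  constructor
  · rintro ⟨⟨hpb, hp⟩, hap⟩
    exact ⟨hp, hap, (Nat.le_floor_iff' hp.ne_zero).mp hpb⟩
  · rintro ⟨hp, hap, hpb⟩
    exact ⟨⟨(Nat.le_floor_iff' hp.ne_zero).mpr hpb, hp⟩, hap⟩

lemma log_log_sub_le_sum_primesIoc {a b : ℝ} (ha : 0 ≤ a) (hb : 1 < b) :
    log (log b) - log 2 - log (2 * a + 3) / 2 ≤ ∑ p ∈ primesIoc a b, log ((p : ℝ) / (p - 1)) := by
  have one_lt {n p : ℕ} (hp : p ∈ n.primesLE) : (1 : ℝ) < p := by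
    exact_mod_cast (Nat.prime_of_mem_primesBelow hp).one_lt
  have hlow : log (log b) ≤ ∑ p ∈ (⌊b⌋₊).primesLE, log ((p : ℝ) / (p - 1)) := by
    rw [← log_prod fun p hp => (div_pos (by linarith [one_lt hp]) (by linarith [one_lt hp])).ne']
    have hb' : b ≤ ⌊b⌋₊ + 1 := (Nat.lt_floor_add_one b).le
    exact log_le_log (log_pos hb) <| (log_le_log (by linarith) hb').trans
      (log_add_one_le_prod_primesLE _)
  have hsmall : ∑ p ∈ (⌊b⌋₊).primesLE.filter (fun p : ℕ => ¬ a < p), log ((p : ℝ) / (p - 1)) ≤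
      log 2 + log (2 * a + 3) / 2 := by
    calc _ ≤ ∑ p ∈ (⌊a⌋₊).primesLE, log ((p : ℝ) / (p - 1)) := by
          refine sum_le_sum_of_subset_of_nonneg (fun p hp => ?_) fun p hp _ =>
            (log_div_sub_one_pos (one_lt hp)).le
          rw [mem_filter, Nat.primesLE, Nat.mem_primesBelow, not_lt] at hp
          rw [Nat.primesLE, Nat.mem_primesBelow]
          exact ⟨Nat.lt_succ_of_le (Nat.le_floor hp.2), hp.1.2⟩
      _ ≤ log 2 + log (2 * ⌊a⌋₊ + 3) / 2 := sum_log_div_sub_one_primesLE_le _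
      _ ≤ log 2 + log (2 * a + 3) / 2 := by
          gcongr
          exact Nat.floor_le ha
  rw [← sum_filter_add_sum_filter_not _ (fun p : ℕ => a < (p : ℝ))] at hlow
  rw [primesIoc]
  linarith

lemma log_log_div_two_sub_le_sum_primesIoc {x : ℝ} (hx : exp 2 ≤ x) :
    log (log x) / 2 - 3 * log 2 ≤
      ∑ p ∈ primesIoc (log x) (x / 2), log ((p : ℝ) / (p - 1)) := by
  have hx0 : 0 < x := (exp_pos 2).trans_le hx
  have hu : 2 ≤ log x := (le_log_iff_exp_le hx0).mpr hx
  have hlog2 : log 2 < 1 := by linarith [log_two_lt_d9]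
  have hlog4 : log 4 = 2 * log 2 := by
    rw [show (4 : ℝ) = 2 ^ 2 by norm_num, log_pow]; push_cast; ring
  have hhalf : log (log x) - log 2 ≤ log (log (x / 2)) := by
    rw [← log_div (by linarith) two_ne_zero, log_div hx0.ne' two_ne_zero]
    exact log_le_log (by linarith) (by linarith)
  have hlog_le : log (2 * log x + 3) ≤ 2 * log 2 + log (log x) := by
    rw [← hlog4, ← log_mul (by norm_num) (by linarith)]
    exact log_le_log (by linarith) (by linarith)
  have hx2 : 1 < x / 2 := by linarith [add_one_le_exp 2]
  linarith [log_log_sub_le_sum_primesIoc (a := log x) (by linarith) hx2]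

lemma tendsto_sum_primesIoc_log_div_sub_one :
    Tendsto (fun x => ∑ p ∈ primesIoc (log x) (x / 2), log ((p : ℝ) / (p - 1))) atTop atTop := by
  refine tendsto_atTop_mono' atTop ?_ <| tendsto_atTop_add_const_right _ (-(3 * log 2))
    ((tendsto_log_atTop.comp tendsto_log_atTop).atTop_div_const two_pos)
  filter_upwards [eventually_ge_atTop (exp 2)] with x hx
  simpa [sub_eq_add_neg] using log_log_div_two_sub_le_sum_primesIoc hx

theorem exists_greedy_prime_sets_totient_general (k : ℕ) :
    ∃ N₀ : ℕ, ∀ N : ℕ, N₀ ≤ N →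
      ∃ P : Fin k → Finset ℕ,
        (∀ i j, i ≠ j → Disjoint (P i) (P j)) ∧
        (∀ i, ∀ p ∈ P i, Nat.Prime p ∧
          Real.log (Real.log (Real.log (Real.log N))) < (p : ℝ) ∧
          (p : ℝ) ≤ Real.log (Real.log (Real.log N)) / 2) ∧
        (∀ i : Fin k,
          4 * ((i : ℕ) + 1 : ℝ) * Real.log 2 ≤
            Real.log 2 + ∑ p ∈ P i, Real.log ((p : ℝ) / ((p : ℝ) - 1)) ∧
          Real.log 2 + ∑ p ∈ P i, Real.log ((p : ℝ) / ((p : ℝ) - 1)) ≤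
            (4 * ((i : ℕ) + 1 : ℝ) + 1) * Real.log 2) := by
  have hL : 0 ≤ log 2 := (log_pos one_lt_two).le
  let t : Fin k → ℝ := fun i => (4 * i + 3) * log 2
  have ht (i : Fin k) : 0 ≤ t i := by positivity
  have hlog₃ : Tendsto (fun N : ℕ => log (log (log N))) atTop atTop :=
    (tendsto_log_atTop.comp (tendsto_log_atTop.comp tendsto_log_atTop)).comp
      tendsto_natCast_atTop_atTop
  obtain ⟨N₀, hN₀⟩ := eventually_atTop.mp <|
    (tendsto_sum_primesIoc_log_div_sub_one.comp hlog₃).eventually_ge_atTop (∑ i, (t i + log 2))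
  refine ⟨N₀, fun N hN => ?_⟩
  obtain ⟨P, hPQ, hP, hPsum⟩ := exists_pairwiseDisjoint_subsets_sum_mem_Icc hL t ht _
    (fun p hp => log_div_sub_one_le_log_two (by exact_mod_cast (mem_primesIoc.mp hp).1.two_le))
    (hN₀ N hN)
  refine ⟨P, fun i j => @hP i j, fun i p hp => mem_primesIoc.mp (hPQ i hp), fun i => ?_⟩
  constructor <;> linarith [(hPsum i).1, (hPsum i).2]

/-- For every `k ≥ 1` and every sufficiently large `N`, there are pairwise disjoint
finite sets `P₁, …, P_k` of primes contained in `(log₄ N, ½ log₃ N]` with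
`4 i log 2 ≤ log 2 + ∑_{p ∈ P_i} log (p / (p - 1)) ≤ (4 i + 1) log 2` for each
`1 ≤ i ≤ k`. -/
theorem exists_greedy_prime_sets_totient (k : ℕ) (hk : 1 ≤ k) :
    ∃ N₀ : ℕ, ∀ N : ℕ, N₀ ≤ N →
      ∃ P : Fin k → Finset ℕ,
        (∀ i j, i ≠ j → Disjoint (P i) (P j)) ∧
        (∀ i, ∀ p ∈ P i, Nat.Prime p ∧
          Real.log (Real.log (Real.log (Real.log N))) < (p : ℝ) ∧
          (p : ℝ) ≤ Real.log (Real.log (Real.log N)) / 2) ∧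
        (∀ i : Fin k,
          4 * ((i : ℕ) + 1 : ℝ) * Real.log 2 ≤
            Real.log 2 + ∑ p ∈ P i, Real.log ((p : ℝ) / ((p : ℝ) - 1)) ∧
          Real.log 2 + ∑ p ∈ P i, Real.log ((p : ℝ) / ((p : ℝ) - 1)) ≤
            (4 * ((i : ℕ) + 1 : ℝ) + 1) * Real.log 2) :=
  exists_greedy_prime_sets_totient_general k
end

section
/- There is an absolute constant C such that the following holds for all integers N ≥ 2, W ≥ 1, all residues a, all integers h with 0 ≤ h ≤ N, and all reals T ≥ 1: the number of integers n with N ≤ n < 2N, n ≡ a (mod W), and such that n + h has a squarefull divisor s with s > T and gcd(s, W) = 1, is at most C (N/(W √T) + √N). -/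
/-!
Every squarefull number is of the form `b³e²`. For a fixed squarefull `s` coprime to `W`, the
`n ∈ [N, 2N)` with `n ≡ a (mod W)` and `s ∣ n + h` lie in one residue class modulo `sW`, so there
are at most `N / (sW) + 1` of them. Since `s ≤ n + h < 3N`, summing over `s` gives at most
`(N / W) ∑_{s > T} 1/s + #{s < 3N}`; parametrizing `s = b³e²` bounds the sum by `6 / √T` (summing
over `e` first) and the count by `3 √(3N)`.
-/

open Finset

def Squarefull (s : ℕ) : Prop := ∀ p : ℕ, p.Prime → p ∣ s → p ^ 2 ∣ s

theorem Squarefull.exists_pow_three_mul_sq {s : ℕ} (hs : Squarefull s) (hs0 : s ≠ 0) :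
    ∃ b e : ℕ, b ^ 3 * e ^ 2 = s := by
  obtain ⟨a, c, -, hc, rfl, ha⟩ := Nat.sq_mul_squarefree_of_pos (Nat.pos_of_ne_zero hs0)
  -- each prime `p ∣ a` has `p² ∣ c²a`, and `a` is squarefree, so `p ∣ c`
  have hac : a ∣ c := by
    rw [← Nat.prod_primeFactors_of_squarefree ha, Nat.prod_primeFactors_dvd_iff hc.ne']
    intro p hp
    have hp' := Nat.prime_of_mem_primeFactors hp
    have hpc : p ^ 1 ∣ c ^ 2 :=
      ha.pow_dvd_of_squarefree_of_pow_succ_dvd_mul_right (k := 1) hp'.prime (by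
        rw [mul_comm a]
        exact hs p hp' ((Nat.dvd_of_mem_primeFactors hp).mul_left _))
    exact Nat.mem_primeFactors.mpr ⟨hp', hp'.dvd_of_dvd_pow (by simpa using hpc), hc.ne'⟩
  obtain ⟨e, rfl⟩ := hac
  exact ⟨a, e, by ring⟩

theorem Squarefull.mem_image_pow_three_mul_sq {s K : ℕ} (hs : Squarefull s) (hs0 : s ≠ 0)
    (hsK : s ≤ K) : s ∈ (Icc 1 K ×ˢ Icc 1 K).image fun q => q.1 ^ 3 * q.2 ^ 2 := by
  obtain ⟨b, e, rfl⟩ := hs.exists_pow_three_mul_sq hs0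
  have hb : b ≠ 0 := by rintro rfl; simp at hs0
  have he : e ≠ 0 := by rintro rfl; simp at hs0
  have hbs : b ≤ b ^ 3 * e ^ 2 :=
    (Nat.le_self_pow three_ne_zero b).trans (Nat.le_mul_of_pos_right _ (by positivity))
  have hes : e ≤ b ^ 3 * e ^ 2 :=
    (Nat.le_self_pow two_ne_zero e).trans (Nat.le_mul_of_pos_left _ (by positivity))
  exact mem_image.mpr ⟨(b, e), by simp only [mem_product, mem_Icc]; omega, rfl⟩

theorem sum_inv_sq_le_of_forall_lt {x : ℝ} (hx : 0 < x) {s : Finset ℕ} (hs : ∀ e ∈ s, x < e) :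
    ∑ e ∈ s, ((e : ℝ) ^ 2)⁻¹ ≤ 2 / x := by
  have hsub : s ⊆ Ioo ⌊x⌋₊ (s.sup id + 1) := fun e he =>
    mem_Ioo.mpr ⟨(Nat.floor_lt hx.le).mpr (hs e he), Nat.lt_succ_of_le (le_sup (f := id) he)⟩
  calc ∑ e ∈ s, ((e : ℝ) ^ 2)⁻¹ ≤ ∑ e ∈ Ioo ⌊x⌋₊ (s.sup id + 1), ((e : ℝ) ^ 2)⁻¹ :=
        sum_le_sum_of_subset_of_nonneg hsub fun _ _ _ => by positivity
    _ ≤ 2 / (⌊x⌋₊ + 1) := sum_Ioo_inv_sq_le _ _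
    _ ≤ 2 / x := div_le_div_of_nonneg_left zero_le_two hx (Nat.lt_floor_add_one x).le

theorem card_le_of_forall_pos_le {y : ℝ} (hy : 0 ≤ y) {s : Finset ℕ}
    (hs : ∀ e ∈ s, 0 < e ∧ (e : ℝ) ≤ y) : (#s : ℝ) ≤ y := by
  have hsub : s ⊆ Icc 1 ⌊y⌋₊ := fun e he => mem_Icc.mpr ⟨(hs e he).1, Nat.le_floor (hs e he).2⟩
  calc (#s : ℝ) ≤ #(Icc 1 ⌊y⌋₊) := by exact_mod_cast card_le_card hsub
    _ = ⌊y⌋₊ := by simp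
    _ ≤ y := Nat.floor_le hy

theorem sum_Ioc_inv_sqrt_pow_three_le_sub {k n : ℕ} (hk : k ≠ 0) (h : k ≤ n) :
    ∑ i ∈ Ioc k n, (√(i : ℝ) ^ 3)⁻¹ ≤ 2 / √(k : ℝ) - 2 / √(n : ℝ) := by
  induction n, h using Nat.le_induction with
  | base => simp
  | succ n hn ih =>
    rw [sum_Ioc_succ_top hn]
    set u := √(n : ℝ)
    set v := √((n + 1 : ℕ) : ℝ)
    have hu : 0 < u := Real.sqrt_pos.mpr (by exact_mod_cast (Nat.pos_of_ne_zero hk).trans_le hn)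
    have huv : u ≤ v := Real.sqrt_le_sqrt (by simp)
    have hvu : v ^ 2 = u ^ 2 + 1 := by
      simp only [u, v, Real.sq_sqrt (Nat.cast_nonneg _)]; push_cast; ring
    have hv : 0 < v := hu.trans_le huv
    have hdiff : 2 / u - 2 / v = 2 / (u * v * (u + v)) := by
      rw [div_sub_div _ _ hu.ne' hv.ne', div_eq_div_iff (by positivity) (by positivity)]
      linear_combination (2 * u * v) * hvu
    have step : (v ^ 3)⁻¹ ≤ 2 / u - 2 / v := by
      rw [hdiff, inv_eq_one_div, div_le_div_iff₀ (by positivity) (by positivity)]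
      nlinarith [mul_le_mul_of_nonneg_left huv (by positivity : 0 ≤ u * v)]
    linarith

theorem sum_Icc_inv_sqrt_pow_three_le (n : ℕ) : ∑ i ∈ Icc 1 n, (√(i : ℝ) ^ 3)⁻¹ ≤ 3 := by
  rcases Nat.eq_zero_or_pos n with rfl | hn
  · simp
  rw [Icc_eq_cons_Ioc hn, sum_cons]
  have htail := sum_Ioc_inv_sqrt_pow_three_le_sub one_ne_zero hn
  simp only [Nat.cast_one, Real.sqrt_one, one_pow, inv_one, div_one] at htail ⊢
  linarith [show 0 ≤ 2 / √(n : ℝ) by positivity]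

theorem card_filter_modEq_Ico_le (a L M v : ℕ) (hM : 0 < M) :
    (#{n ∈ Ico a (a + L) | n ≡ v [MOD M]} : ℝ) ≤ L / M + 1 := by
  have hcard := Nat.Ico_filter_modEq_card a (a + L) hM v
  have hceil : (#{n ∈ Ico a (a + L) | n ≡ v [MOD M]} : ℤ) ≤ ⌈(L : ℚ) / M⌉ := by
    rw [hcard, max_le_iff]
    refine ⟨?_, Int.ceil_nonneg (by positivity)⟩
    have hsplit : (((a + L : ℕ) : ℚ) - v) / M = (a - v) / M + L / M := by push_cast; ring
    rw [hsplit]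
    linarith [Int.ceil_add_le (((a : ℚ) - v) / M) ((L : ℚ) / M)]
  have hq : (#{n ∈ Ico a (a + L) | n ≡ v [MOD M]} : ℚ) ≤ L / M + 1 := by
    have hc : ((#{n ∈ Ico a (a + L) | n ≡ v [MOD M]} : ℤ) : ℚ) ≤ ⌈(L : ℚ) / M⌉ := by
      exact_mod_cast hceil
    push_cast at hc
    linarith [Int.ceil_lt_add_one ((L : ℚ) / M)]
  simpa using (Rat.cast_le (K := ℝ)).mpr hq

theorem card_le_of_forall_modEq {F : Finset ℕ} {a L M : ℕ} (hM : 0 < M) (hF : F ⊆ Ico a (a + L))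
    (hmod : ∀ m ∈ F, ∀ n ∈ F, m ≡ n [MOD M]) : (#F : ℝ) ≤ L / M + 1 := by
  rcases F.eq_empty_or_nonempty with rfl | ⟨n₀, hn₀⟩
  · simp only [card_empty, Nat.cast_zero]
    positivity
  have hsub : F ⊆ {n ∈ Ico a (a + L) | n ≡ n₀ [MOD M]} := fun n hn =>
    mem_filter.mpr ⟨hF hn, hmod n hn n₀ hn₀⟩
  calc (#F : ℝ) ≤ #{n ∈ Ico a (a + L) | n ≡ n₀ [MOD M]} := by exact_mod_cast card_le_card hsub
    _ ≤ L / M + 1 := card_filter_modEq_Ico_le a L M n₀ hM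

theorem card_squarefull_le {X : ℝ} (hX : 0 ≤ X) (S : Finset ℕ)
    (hS : ∀ s ∈ S, Squarefull s ∧ 0 < s ∧ (s : ℝ) ≤ X) : (#S : ℝ) ≤ 3 * √X := by
  set K := ⌊X⌋₊
  set P := {q ∈ Icc 1 K ×ˢ Icc 1 K | ((q.1 ^ 3 * q.2 ^ 2 : ℕ) : ℝ) ≤ X}
  have hSP : S ⊆ P.image fun q => q.1 ^ 3 * q.2 ^ 2 := by
    intro s hs
    obtain ⟨hsq, hs0, hsX⟩ := hS s hs
    rw [← filter_image (p := fun s : ℕ => (s : ℝ) ≤ X)]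
    exact mem_filter.mpr ⟨hsq.mem_image_pow_three_mul_sq hs0.ne' (Nat.le_floor hsX), hsX⟩
  have hrow : ∀ b ∈ Icc 1 K,
      (#{e ∈ Icc 1 K | ((b ^ 3 * e ^ 2 : ℕ) : ℝ) ≤ X} : ℝ) ≤ √X * (√(b : ℝ) ^ 3)⁻¹ := by
    intro b hb
    have hb3 : 0 < √(b : ℝ) ^ 3 := by
      have : (0 : ℝ) < b := by exact_mod_cast (mem_Icc.mp hb).1
      positivity
    refine card_le_of_forall_pos_le (by positivity) fun e he => ?_
    obtain ⟨he, heX⟩ := mem_filter.mp he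
    refine ⟨(mem_Icc.mp he).1, ?_⟩
    rw [← div_eq_mul_inv, le_div_iff₀ hb3, Real.le_sqrt (by positivity) hX]
    calc ((e : ℝ) * √(b : ℝ) ^ 3) ^ 2 = ((b ^ 3 * e ^ 2 : ℕ) : ℝ) := by
          rw [mul_pow, ← pow_mul, mul_comm 3 2, pow_mul, Real.sq_sqrt (Nat.cast_nonneg _)]
          push_cast; ring
      _ ≤ X := heX
  have hP : #P = ∑ b ∈ Icc 1 K, #{e ∈ Icc 1 K | ((b ^ 3 * e ^ 2 : ℕ) : ℝ) ≤ X} := by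
    simp only [P, card_filter, sum_product]
  calc (#S : ℝ) ≤ #P := by exact_mod_cast (card_le_card hSP).trans card_image_le
    _ = ∑ b ∈ Icc 1 K, (#{e ∈ Icc 1 K | ((b ^ 3 * e ^ 2 : ℕ) : ℝ) ≤ X} : ℝ) := by
        rw [hP, Nat.cast_sum]
    _ ≤ ∑ b ∈ Icc 1 K, √X * (√(b : ℝ) ^ 3)⁻¹ := sum_le_sum hrow
    _ = √X * ∑ b ∈ Icc 1 K, (√(b : ℝ) ^ 3)⁻¹ := (mul_sum _ _ _).symm
    _ ≤ √X * 3 := by gcongr; exact sum_Icc_inv_sqrt_pow_three_le K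
    _ = 3 * √X := mul_comm _ _

theorem sum_inv_squarefull_le {T : ℝ} (hT : 0 < T) (S : Finset ℕ)
    (hS : ∀ s ∈ S, Squarefull s ∧ T < s) : ∑ s ∈ S, (s : ℝ)⁻¹ ≤ 6 / √T := by
  set K := S.sup id
  set P := {q ∈ Icc 1 K ×ˢ Icc 1 K | T < ((q.1 ^ 3 * q.2 ^ 2 : ℕ) : ℝ)}
  have hSP : S ⊆ P.image fun q => q.1 ^ 3 * q.2 ^ 2 := by
    intro s hs
    obtain ⟨hsq, hTs⟩ := hS s hs
    have hs0 : s ≠ 0 := by rintro rfl; simp at hTs; linarith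
    rw [← filter_image (p := fun s : ℕ => T < (s : ℝ))]
    exact mem_filter.mpr ⟨hsq.mem_image_pow_three_mul_sq hs0 (le_sup (f := id) hs), hTs⟩
  have hrow : ∀ b ∈ Icc 1 K, ∑ e ∈ Icc 1 K with T < ((b ^ 3 * e ^ 2 : ℕ) : ℝ),
      ((b ^ 3 * e ^ 2 : ℕ) : ℝ)⁻¹ ≤ 2 / √T * (√(b : ℝ) ^ 3)⁻¹ := by
    intro b hb
    have hb : (0 : ℝ) < b := by exact_mod_cast (mem_Icc.mp hb).1
    have hb3 : 0 < √(b : ℝ) ^ 3 := by positivity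
    have hsT : 0 < √T := Real.sqrt_pos.mpr hT
    have hsqb : (b : ℝ) ^ 3 = (√(b : ℝ) ^ 3) ^ 2 := by
      rw [← pow_mul, mul_comm 3 2, pow_mul, Real.sq_sqrt hb.le]
    simp_rw [Nat.cast_mul, Nat.cast_pow, mul_inv, ← mul_sum]
    calc ((b : ℝ) ^ 3)⁻¹ * ∑ e ∈ Icc 1 K with T < (b : ℝ) ^ 3 * ((e : ℕ) : ℝ) ^ 2, ((e : ℝ) ^ 2)⁻¹
        ≤ ((b : ℝ) ^ 3)⁻¹ * (2 / (√T / √(b : ℝ) ^ 3)) := by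
          gcongr
          refine sum_inv_sq_le_of_forall_lt (by positivity) fun e he => ?_
          rw [div_lt_iff₀ hb3, ← Real.sqrt_sq (by positivity : (0 : ℝ) ≤ e * √(b : ℝ) ^ 3)]
          refine Real.sqrt_lt_sqrt hT.le ?_
          calc T < (b : ℝ) ^ 3 * (e : ℝ) ^ 2 := (mem_filter.mp he).2
            _ = ((e : ℝ) * √(b : ℝ) ^ 3) ^ 2 := by rw [hsqb]; ring
      _ = 2 / √T * (√(b : ℝ) ^ 3)⁻¹ := by
          rw [hsqb]
          field_simp
  calc ∑ s ∈ S, (s : ℝ)⁻¹ ≤ ∑ s ∈ P.image (fun q => q.1 ^ 3 * q.2 ^ 2), ((s : ℕ) : ℝ)⁻¹ :=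
        sum_le_sum_of_subset_of_nonneg hSP fun _ _ _ => by positivity
    _ ≤ ∑ q ∈ P, ((q.1 ^ 3 * q.2 ^ 2 : ℕ) : ℝ)⁻¹ :=
        sum_image_le_of_nonneg (f := fun s : ℕ => (s : ℝ)⁻¹) fun _ _ => by positivity
    _ = ∑ b ∈ Icc 1 K, ∑ e ∈ Icc 1 K with T < ((b ^ 3 * e ^ 2 : ℕ) : ℝ),
          ((b ^ 3 * e ^ 2 : ℕ) : ℝ)⁻¹ := by
        simp only [P, sum_filter, sum_product]
    _ ≤ ∑ b ∈ Icc 1 K, 2 / √T * (√(b : ℝ) ^ 3)⁻¹ := sum_le_sum hrow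
    _ = 2 / √T * ∑ b ∈ Icc 1 K, (√(b : ℝ) ^ 3)⁻¹ := (mul_sum _ _ _).symm
    _ ≤ 2 / √T * 3 := by gcongr; exact sum_Icc_inv_sqrt_pow_three_le K
    _ = 6 / √T := by ring

theorem card_Ico_filter_modEq_dvd_add_le (N L : ℕ) {W s : ℕ} (hW : 0 < W) (hs : 0 < s)
    (hsW : s.Coprime W) (a h : ℕ) :
    (#{n ∈ Ico N (N + L) | n ≡ a [MOD W] ∧ s ∣ n + h} : ℝ) ≤ L / (s * W) + 1 := by
  refine (card_le_of_forall_modEq (M := s * W) (by positivity) (filter_subset _ _) ?_).trans_eq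
    (by push_cast; rfl)
  intro m hm n hn
  obtain ⟨-, hmW, hms⟩ := mem_filter.mp hm
  obtain ⟨-, hnW, hns⟩ := mem_filter.mp hn
  refine (Nat.modEq_and_modEq_iff_modEq_mul hsW).mp ⟨?_, hmW.trans hnW.symm⟩
  exact Nat.ModEq.add_right_cancel' h
    ((Nat.modEq_zero_iff_dvd.mpr hms).trans (Nat.modEq_zero_iff_dvd.mpr hns).symm)

open Classical in
theorem ncard_squarefull_divisor_le (N W a h : ℕ) (hW : 0 < W) (hh : h ≤ N) {T : ℝ} (hT : 0 ≤ T) :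
    (Set.ncard {n : ℕ | N ≤ n ∧ n < 2 * N ∧ n ≡ a [MOD W] ∧
        ∃ s, Squarefull s ∧ s ∣ n + h ∧ T < s ∧ s.Coprime W} : ℝ) ≤
      N / W * ∑ s ∈ {s ∈ range (3 * N) | Squarefull s ∧ T < s ∧ s.Coprime W}, (s : ℝ)⁻¹ +
        #{s ∈ range (3 * N) | Squarefull s ∧ T < s ∧ s.Coprime W} := by
  set S := {s ∈ range (3 * N) | Squarefull s ∧ T < s ∧ s.Coprime W}
  set A : ℕ → Finset ℕ := fun s => {n ∈ Ico N (N + N) | n ≡ a [MOD W] ∧ s ∣ n + h}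
  have hcover : {n : ℕ | N ≤ n ∧ n < 2 * N ∧ n ≡ a [MOD W] ∧
      ∃ s, Squarefull s ∧ s ∣ n + h ∧ T < s ∧ s.Coprime W} ⊆ S.biUnion A := by
    rintro n ⟨hNn, hn, hna, s, hs, hsn, hTs, hsW⟩
    have hs3N : s < 3 * N := (Nat.le_of_dvd (by omega) hsn).trans_lt (by omega)
    simp only [coe_biUnion, Set.mem_iUnion, mem_coe]
    exact ⟨s, mem_filter.mpr ⟨mem_range.mpr hs3N, hs, hTs, hsW⟩,
      mem_filter.mpr ⟨mem_Ico.mpr ⟨hNn, by omega⟩, hna, hsn⟩⟩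
  calc _ ≤ (#(S.biUnion A) : ℝ) := by
        exact_mod_cast (Set.ncard_le_ncard hcover (finite_toSet _)).trans_eq (Set.ncard_coe_finset _)
    _ ≤ ∑ s ∈ S, (#(A s) : ℝ) := by exact_mod_cast card_biUnion_le
    _ ≤ ∑ s ∈ S, ((N : ℝ) / (s * W) + 1) := sum_le_sum fun s hs => by
        obtain ⟨-, -, hTs, hsW⟩ := mem_filter.mp hs
        exact card_Ico_filter_modEq_dvd_add_le N N hW (Nat.cast_pos.mp (hT.trans_lt hTs)) hsW a h
    _ = N / W * ∑ s ∈ S, (s : ℝ)⁻¹ + #S := by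
        rw [sum_add_distrib, mul_sum, sum_const, nsmul_one]
        congr 1
        exact sum_congr rfl fun s _ => by ring

/-- There is an absolute constant `C` such that for all `N ≥ 2`, `W ≥ 1`, residues `a`,
shifts `0 ≤ h ≤ N`, and `T ≥ 1`: the number of `n ∈ [N, 2N)` with `n ≡ a (mod W)` such
that `n + h` has a squarefull divisor `s > T` coprime to `W` is at most
`C (N / (W √T) + √N)`. -/
theorem squarefull_divisor_count :
    ∃ C : ℝ, ∀ N W : ℕ, 2 ≤ N → 1 ≤ W → ∀ a : ℕ, ∀ h : ℕ, h ≤ N → ∀ T : ℝ, 1 ≤ T →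
      ((Set.ncard {n : ℕ | N ≤ n ∧ n < 2 * N ∧ n % W = a % W ∧
          ∃ s : ℕ, (∀ p : ℕ, p.Prime → p ∣ s → p ^ 2 ∣ s) ∧ s ∣ n + h ∧
            T < (s : ℝ) ∧ Nat.gcd s W = 1}) : ℝ) ≤
        C * ((N : ℝ) / ((W : ℝ) * Real.sqrt T) + Real.sqrt N) := by
  classical
  refine ⟨6, fun N W _ hW a h hh T hT => ?_⟩
  set S := {s ∈ range (3 * N) | Squarefull s ∧ T < s ∧ s.Coprime W}
  have hS : ∀ s ∈ S, Squarefull s ∧ T < s ∧ 0 < s ∧ (s : ℝ) ≤ 3 * N := by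
    intro s hs
    obtain ⟨hs3N, hsq, hTs, -⟩ := mem_filter.mp hs
    refine ⟨hsq, hTs, Nat.cast_pos.mp (by linarith : (0 : ℝ) < s), ?_⟩
    exact_mod_cast (mem_range.mp hs3N).le
  have hcard : (#S : ℝ) ≤ 6 * √N := by
    calc (#S : ℝ) ≤ 3 * √(3 * N) := card_squarefull_le (by positivity) S fun s hs => by
          obtain ⟨hsq, -, hs0, hsN⟩ := hS s hs
          exact ⟨hsq, hs0, hsN⟩
      _ ≤ 3 * (2 * √N) := by
          rw [Real.sqrt_mul zero_le_three]
          gcongr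
          exact Real.sqrt_le_iff.mpr ⟨zero_le_two, by norm_num⟩
      _ = 6 * √N := by ring
  have hsum : ∑ s ∈ S, (s : ℝ)⁻¹ ≤ 6 / √T :=
    sum_inv_squarefull_le (by positivity) S fun s hs => ⟨(hS s hs).1, (hS s hs).2.1⟩
  calc _ ≤ N / W * ∑ s ∈ S, (s : ℝ)⁻¹ + #S :=
        ncard_squarefull_divisor_le N W a h hW hh (by positivity)
    _ ≤ N / W * (6 / √T) + 6 * √N := by gcongr
    _ = 6 * ((N : ℝ) / ((W : ℝ) * Real.sqrt T) + Real.sqrt N) := by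
        field_simp
end
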